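/- Let P, Q ∈ ℂ[x] with deg P = n, deg Q = m, and let R(y) := res_x(Q(x), y − P(x)) be the resultant with respect to x, a polynomial in ℂ[y]. Then |R|_1 ≤ (|P|_1 + 1)^m · |Q|_1^n, where |·|_1 denotes the sum of absolute values of coefficients. -/

import Mathlib

open Polynomial

/-- The 1-seminorm of a complex polynomial: sum of absolute values of its
coefficients. -/
noncomputable def pnorm1 (P : Polynomial ℂ) : ℝ :=
  ∑ k ∈ P.support, ‖P.coeff k‖

/-!
Over `ℂ` the polynomial `Q` splits, so `R = b^n ∏_{Q(μ) = 0} (y - P(μ))` with `b = lc Q`. The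
1-norm is submultiplicative, hence `|R|₁ ≤ |b|^n ∏ (1 + |P(μ)|)`, and each factor is at most
`(|P|₁ + 1) max(1, |μ|)^n`. What remains is `(|b| ∏ max(1, |μ|))^n = M(Q)^n`, where the Mahler
measure `M(Q)` is at most `|Q|₁`.
-/

lemma pnorm1_eq_sum (p : ℂ[X]) : pnorm1 p = p.sum fun _ a ↦ ‖a‖ := rfl

lemma pnorm1_nonneg (p : ℂ[X]) : 0 ≤ pnorm1 p :=
  Finset.sum_nonneg fun _ _ ↦ norm_nonneg _

lemma pnorm1_eq_sum_range {p : ℂ[X]} {N : ℕ} (hN : p.natDegree < N) :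
    pnorm1 p = ∑ k ∈ Finset.range N, ‖p.coeff k‖ :=
  p.sum_over_range' (fun _ ↦ norm_zero) N hN

@[simp] lemma pnorm1_C (c : ℂ) : pnorm1 (C c) = ‖c‖ := by
  simp [pnorm1_eq_sum_range (p := C c) (N := 1) (by simp)]

@[simp] lemma pnorm1_one : pnorm1 1 = 1 := by
  simpa using pnorm1_C 1

lemma pnorm1_X_sub_C (a : ℂ) : pnorm1 (X - C a) = 1 + ‖a‖ := by
  rw [pnorm1_eq_sum_range (N := 2) (by simp)]
  simp [Finset.sum_range_succ, coeff_X, add_comm]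

noncomputable def normCoeffs (p : ℂ[X]) : ℝ[X] :=
  ∑ k ∈ p.support, monomial k ‖p.coeff k‖

@[simp] lemma coeff_normCoeffs (p : ℂ[X]) (k : ℕ) : (normCoeffs p).coeff k = ‖p.coeff k‖ := by
  simp only [normCoeffs, finsetSum_coeff, coeff_monomial, Finset.sum_ite_eq']
  split_ifs with hk
  · rfl
  · simp [notMem_support_iff.mp hk]

lemma eval_one_normCoeffs (p : ℂ[X]) : (normCoeffs p).eval 1 = pnorm1 p := by
  have hsupp : (normCoeffs p).support = p.support := by
    ext k; simp
  rw [eval_eq_sum, sum_def, hsupp, pnorm1_eq_sum, sum_def]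
  simp

lemma pnorm1_le_eval_one {r : ℂ[X]} {s : ℝ[X]} (h : ∀ k, ‖r.coeff k‖ ≤ s.coeff k) :
    pnorm1 r ≤ s.eval 1 := by
  have hsupp : r.support ⊆ s.support := fun k hk ↦ by
    have := norm_pos_iff.mpr (mem_support_iff.mp hk)
    exact mem_support_iff.mpr (by linarith [h k])
  rw [eval_eq_sum, sum_def]
  simp only [one_pow, mul_one]
  exact (Finset.sum_le_sum fun k _ ↦ h k).trans
    (Finset.sum_le_sum_of_subset_of_nonneg hsupp fun k _ _ ↦ (norm_nonneg _).trans (h k))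

lemma norm_coeff_mul_le (p q : ℂ[X]) (k : ℕ) :
    ‖(p * q).coeff k‖ ≤ (normCoeffs p * normCoeffs q).coeff k := by
  rw [coeff_mul, coeff_mul]
  refine (norm_sum_le _ _).trans_eq ?_
  simp

lemma pnorm1_mul_le (p q : ℂ[X]) : pnorm1 (p * q) ≤ pnorm1 p * pnorm1 q := by
  simpa [eval_one_normCoeffs] using pnorm1_le_eval_one (norm_coeff_mul_le p q)

lemma pnorm1_multiset_prod_le (s : Multiset ℂ[X]) : pnorm1 s.prod ≤ (s.map pnorm1).prod :=
  s.le_prod_of_submultiplicative_of_nonneg pnorm1 pnorm1_nonneg pnorm1_one.le pnorm1_mul_le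

lemma pnorm1_C_mul_prod_X_sub_C_le (c : ℂ) (s : Multiset ℂ) :
    pnorm1 (C c * (s.map fun a ↦ X - C a).prod) ≤ ‖c‖ * (s.map fun a ↦ 1 + ‖a‖).prod := by
  calc pnorm1 (C c * (s.map fun a ↦ X - C a).prod)
      ≤ ‖c‖ * ((s.map fun a ↦ X - C a).map pnorm1).prod := by
        grw [pnorm1_mul_le, pnorm1_C, pnorm1_multiset_prod_le]
    _ = ‖c‖ * (s.map fun a ↦ 1 + ‖a‖).prod := by
        simp only [Multiset.map_map, Function.comp_def, pnorm1_X_sub_C]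

lemma norm_eval_le_pnorm1_mul_max_one_pow (p : ℂ[X]) (z : ℂ) :
    ‖p.eval z‖ ≤ pnorm1 p * max 1 ‖z‖ ^ p.natDegree := by
  rw [eval_eq_sum_range, pnorm1_eq_sum_range (Nat.lt_succ_self _), Finset.sum_mul]
  refine (norm_sum_le _ _).trans (Finset.sum_le_sum fun i hi ↦ ?_)
  rw [norm_mul, norm_pow]
  gcongr
  calc ‖z‖ ^ i ≤ max 1 ‖z‖ ^ i := by gcongr; exact le_max_right _ _
    _ ≤ max 1 ‖z‖ ^ p.natDegree :=
      pow_le_pow_right₀ (le_max_left _ _) (Nat.lt_succ_iff.mp (Finset.mem_range.mp hi))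

lemma prod_one_add_norm_eval_le (p : ℂ[X]) (s : Multiset ℂ) :
    (s.map fun z ↦ 1 + ‖p.eval z‖).prod ≤
      (pnorm1 p + 1) ^ Multiset.card s * (s.map fun z ↦ max 1 ‖z‖).prod ^ p.natDegree := by
  calc (s.map fun z ↦ 1 + ‖p.eval z‖).prod
      ≤ (s.map fun z ↦ (pnorm1 p + 1) * max 1 ‖z‖ ^ p.natDegree).prod := by
        refine Multiset.prod_map_le_prod_map₀ _ _ (fun _ _ ↦ by positivity) fun z _ ↦ ?_
        have h1 : 1 ≤ max 1 ‖z‖ ^ p.natDegree := one_le_pow₀ (le_max_left _ _)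
        nlinarith [norm_eval_le_pnorm1_mul_max_one_pow p z, pnorm1_nonneg p]
    _ = _ := by
        rw [Multiset.prod_map_mul, Multiset.map_const', Multiset.prod_replicate,
          Multiset.prod_map_pow]

theorem stmt_12_general (P Q : Polynomial ℂ)
    (R : Polynomial ℂ)
    (hR : R = Polynomial.C (Q.leadingCoeff ^ P.natDegree) *
      (Q.roots.map fun μ => (Polynomial.X : Polynomial ℂ) - Polynomial.C (P.eval μ)).prod) :
    pnorm1 R ≤ (pnorm1 P + 1) ^ Q.natDegree * pnorm1 Q ^ P.natDegree := by
  have hR_le : pnorm1 R ≤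
      ‖Q.leadingCoeff‖ ^ P.natDegree * (Q.roots.map fun μ ↦ 1 + ‖P.eval μ‖).prod := by
    simpa [hR, Multiset.map_map, Function.comp_def] using
      pnorm1_C_mul_prod_X_sub_C_le (Q.leadingCoeff ^ P.natDegree) (Q.roots.map P.eval)
  calc pnorm1 R
      ≤ ‖Q.leadingCoeff‖ ^ P.natDegree * ((pnorm1 P + 1) ^ Q.natDegree *
          (Q.roots.map fun μ ↦ max 1 ‖μ‖).prod ^ P.natDegree) := by
        grw [hR_le, prod_one_add_norm_eval_le, IsAlgClosed.card_roots_eq_natDegree]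
    _ = (pnorm1 P + 1) ^ Q.natDegree * Q.mahlerMeasure ^ P.natDegree := by
        rw [mahlerMeasure_eq_leadingCoeff_mul_prod_roots]; ring
    _ ≤ (pnorm1 P + 1) ^ Q.natDegree * pnorm1 Q ^ P.natDegree := by
        have := pnorm1_nonneg P
        gcongr
        exacts [mahlerMeasure_nonneg Q, mahlerMeasure_le_sum_norm_coeff Q]

theorem stmt_12 (P Q : Polynomial ℂ) (hP : P ≠ 0) (hQ : Q ≠ 0)
    (hQsplit : Q.Splits)
    (R : Polynomial ℂ)
    (hR : R = Polynomial.C (Q.leadingCoeff ^ P.natDegree) *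
      (Q.roots.map fun μ => (Polynomial.X : Polynomial ℂ) - Polynomial.C (P.eval μ)).prod) :
    pnorm1 R ≤ (pnorm1 P + 1) ^ Q.natDegree * pnorm1 Q ^ P.natDegree :=
  stmt_12_general P Q R hR
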